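/- arXiv:1502.05658 — 3 statements merged into one kernel-verified Lean document; each statement's English description precedes it below -/
import Mathlib

section
/- Define G(ξ) := B₀[ (sin π(ξ+1/4) / (π(ξ+1/4)))² + (sin π(ξ−1/4) / (π(ξ−1/4)))² ] with B₀ = 2π². Then for all real ξ, 1/(1+ξ²) ≤ G(ξ). -/
open Real

noncomputable def rodgersG (ξ : ℝ) : ℝ :=
  2 * π ^ 2 * ((Real.sin (π * (ξ + 1 / 4)) / (π * (ξ + 1 / 4))) ^ 2 +
    (Real.sin (π * (ξ - 1 / 4)) / (π * (ξ - 1 / 4))) ^ 2)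

theorem Q_le_G (ξ : ℝ) : 1 / (1 + ξ ^ 2) ≤ rodgersG ξ := by
  have hπ : (0:ℝ) < π := Real.pi_pos
  have hπ2 : (0:ℝ) < π ^ 2 := by positivity
  have hsum : Real.sin (π * (ξ + 1/4)) ^ 2 + Real.sin (π * (ξ - 1/4)) ^ 2 = 1 := by
    have h1 : π * (ξ + 1/4) = π * ξ + π/4 := by ring
    have h2 : π * (ξ - 1/4) = π * ξ - π/4 := by ring
    rw [h1, h2, Real.sin_add, Real.sin_sub, Real.sin_pi_div_four, Real.cos_pi_div_four]
    nlinarith [Real.sin_sq_add_cos_sq (π*ξ), Real.sq_sqrt (by norm_num : (0:ℝ) ≤ 2)]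
  rcases eq_or_ne ξ (-(1/4)) with h | hane
  · subst h
    unfold rodgersG
    norm_num
    have e1 : π * (1/2 : ℝ) = π/2 := by ring
    rw [e1, Real.sin_pi_div_two]
    have h8 : (2:ℝ) * π ^ 2 * (1 / (π / 2)) ^ 2 = 8 := by
      field_simp; ring
    rw [h8]
    norm_num
  rcases eq_or_ne ξ (1/4) with h | hbne
  · subst h
    unfold rodgersG
    norm_num
    have e1 : π * (1/2 : ℝ) = π/2 := by ring
    rw [e1, Real.sin_pi_div_two]
    have h8 : (2:ℝ) * π ^ 2 * (1 / (π / 2)) ^ 2 = 8 := by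
      field_simp; ring
    rw [h8]
    norm_num
  · have ha : ξ + 1/4 ≠ 0 := by intro h; apply hane; linarith
    have hb : ξ - 1/4 ≠ 0 := by intro h; apply hbne; linarith
    have ha2 : (0:ℝ) < (ξ + 1/4) ^ 2 := by positivity
    have hb2 : (0:ℝ) < (ξ - 1/4) ^ 2 := by positivity
    set u := Real.sin (π * (ξ + 1/4)) ^ 2 with hu_def
    set v := Real.sin (π * (ξ - 1/4)) ^ 2 with hv_def
    have hu : 0 ≤ u := sq_nonneg _
    have hv : 0 ≤ v := sq_nonneg _
    have hG : rodgersG ξ = 2 * (u / (ξ + 1/4)^2 + v / (ξ - 1/4)^2) := by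
      unfold rodgersG
      have hπ2ne : (π^2:ℝ) ≠ 0 := ne_of_gt hπ2
      rw [div_pow, div_pow, mul_pow, mul_pow]
      have e1 : Real.sin (π*(ξ+1/4))^2 / (π^2 * (ξ+1/4)^2) = u/(ξ+1/4)^2 * (π^2)⁻¹ := by
        rw [mul_comm (π^2), ← div_div, div_eq_mul_inv]
      have e2 : Real.sin (π*(ξ-1/4))^2 / (π^2 * (ξ-1/4)^2) = v/(ξ-1/4)^2 * (π^2)⁻¹ := by
        rw [mul_comm (π^2), ← div_div, div_eq_mul_inv]
      rw [e1, e2]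
      calc 2 * π^2 * (u/(ξ+1/4)^2 * (π^2)⁻¹ + v/(ξ-1/4)^2 * (π^2)⁻¹)
          = 2 * (π^2 * (π^2)⁻¹) * (u/(ξ+1/4)^2 + v/(ξ-1/4)^2) := by ring
        _ = 2 * (u/(ξ+1/4)^2 + v/(ξ-1/4)^2) := by rw [mul_inv_cancel₀ hπ2ne, mul_one]
    rw [hG]
    have h1 : (ξ + 1/4)^2 ≤ 2 * (1 + ξ^2) := by nlinarith [sq_nonneg (ξ - 1/4)]
    have h2 : (ξ - 1/4)^2 ≤ 2 * (1 + ξ^2) := by nlinarith [sq_nonneg (ξ + 1/4)]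
    have hx : (0:ℝ) < 1 + ξ^2 := by positivity
    rw [div_add_div _ _ (ne_of_gt ha2) (ne_of_gt hb2), mul_div_assoc',
      div_le_div_iff₀ hx (by positivity), one_mul]
    have hs : (u + v) * ((ξ+1/4)^2 * (ξ-1/4)^2) = (ξ+1/4)^2 * (ξ-1/4)^2 := by
      rw [hsum, one_mul]
    nlinarith [mul_nonneg (mul_nonneg hu hb2.le) (sub_nonneg.2 h1),
      mul_nonneg (mul_nonneg hv ha2.le) (sub_nonneg.2 h2), hs]
end

section
/- Suppose a family of nonnegative random variables Z_T (indexed by T) satisfies: P(Z_T ≥ r) ≤ C e^{−c r log(r+2)} for all r ≥ 0 uniformly in T, with c, C > 0. Then for every natural number k, | E[ e^{Z_T} − ∑_{ℓ=0}^k Z_T^ℓ/ℓ! ] | ≤ C'/(k+1), uniformly in T, for a constant C' depending only on c and C. -/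
set_option maxHeartbeats 1000000


open MeasureTheory Finset

private lemma exp_tsum' (x : ℝ) : Real.exp x = ∑' n : ℕ, x ^ n / (Nat.factorial n : ℝ) := by
  rw [Real.exp_eq_exp_ℝ, NormedSpace.exp_eq_tsum_div]

private lemma remainder_le' (x : ℝ) (hx : 0 ≤ x) (k : ℕ) :
    Real.exp x - ∑ ℓ ∈ Finset.range (k + 1), x ^ ℓ / (Nat.factorial ℓ)
      ≤ x ^ (k + 1) * Real.exp x / (Nat.factorial (k + 1)) := by
  have hsum : Summable (fun n : ℕ => x ^ n / (Nat.factorial n : ℝ)) :=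
    Real.summable_pow_div_factorial x
  have hsplit := Summable.sum_add_tsum_nat_add (f := fun n : ℕ => x ^ n / (Nat.factorial n : ℝ))
    (k + 1) hsum
  have h1 : Real.exp x - ∑ ℓ ∈ Finset.range (k + 1), x ^ ℓ / (Nat.factorial ℓ)
      = ∑' n : ℕ, x ^ (n + (k + 1)) / (Nat.factorial (n + (k + 1)) : ℝ) := by
    rw [exp_tsum' x, ← hsplit]; ring
  rw [h1]
  have h2 : ∀ n : ℕ, x ^ (n + (k + 1)) / (Nat.factorial (n + (k + 1)) : ℝ)
      ≤ (x ^ (k + 1) / (Nat.factorial (k + 1) : ℝ)) * (x ^ n / (Nat.factorial n : ℝ)) := by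
    intro n
    have hd0 : Nat.factorial (k + 1) * Nat.factorial n ≤ Nat.factorial (n + (k + 1)) := by
      rw [Nat.mul_comm]
      exact Nat.le_of_dvd (Nat.factorial_pos _)
        (Nat.factorial_mul_factorial_dvd_factorial_add n (k + 1))
    have hd : (Nat.factorial (k + 1) : ℝ) * (Nat.factorial n : ℝ)
        ≤ (Nat.factorial (n + (k + 1)) : ℝ) := by exact_mod_cast hd0
    have hpos : (0 : ℝ) < (Nat.factorial (k + 1) : ℝ) * (Nat.factorial n : ℝ) := by
      have h1 : (0 : ℝ) < (Nat.factorial (k + 1) : ℝ) := by exact_mod_cast Nat.factorial_pos _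
      have h2 : (0 : ℝ) < (Nat.factorial n : ℝ) := by exact_mod_cast Nat.factorial_pos _
      exact mul_pos h1 h2
    have hxp : x ^ (n + (k + 1)) = x ^ (k + 1) * x ^ n := by rw [pow_add]; ring
    rw [hxp, div_mul_div_comm]
    exact div_le_div_of_nonneg_left (by positivity) hpos hd
  have hsum2 : Summable (fun n : ℕ => x ^ (n + (k + 1)) / (Nat.factorial (n + (k + 1)) : ℝ)) :=
    (summable_nat_add_iff (k + 1)).mpr hsum
  calc ∑' n : ℕ, x ^ (n + (k + 1)) / (Nat.factorial (n + (k + 1)) : ℝ)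
      ≤ ∑' n : ℕ, (x ^ (k + 1) / (Nat.factorial (k + 1) : ℝ)) * (x ^ n / (Nat.factorial n : ℝ)) :=
        Summable.tsum_le_tsum h2 hsum2 (hsum.mul_left _)
    _ = (x ^ (k + 1) / (Nat.factorial (k + 1) : ℝ)) * Real.exp x := by
        rw [tsum_mul_left, ← exp_tsum' x]
    _ = x ^ (k + 1) * Real.exp x / (Nat.factorial (k + 1)) := by ring

theorem exp_series_truncation_uniform (c C : ℝ) (hc : 0 < c) (hC : 0 < C) :
    ∃ C' : ℝ, 0 < C' ∧
      ∀ (Ω : Type) (_ : MeasurableSpace Ω) (μ : Measure Ω), IsProbabilityMeasure μ →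
      ∀ Z : Ω → ℝ, Measurable Z → (∀ ω, 0 ≤ Z ω) →
      (∀ r : ℝ, 0 ≤ r →
        (μ {ω | r ≤ Z ω}).toReal ≤ C * Real.exp (-(c * r * Real.log (r + 2)))) →
      ∀ k : ℕ,
        |∫ ω, (Real.exp (Z ω) -
            ∑ ℓ ∈ Finset.range (k + 1), (Z ω) ^ ℓ / (Nat.factorial ℓ)) ∂μ|
          ≤ C' / (k + 1) := by
  -- the sequence of tail bounds
  set φ : ℕ → ℝ := fun n => ((n : ℝ) + 1) * Real.exp (2 * n + 2) with hφ_def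
  set b : ℕ → ℝ := fun n => φ n * (C * Real.exp (-(c * n * Real.log ((n : ℝ) + 2)))) with hb_def
  have hb_nonneg : ∀ n, 0 ≤ b n := fun n => by
    simp only [hb_def, hφ_def]; positivity
  obtain ⟨N, hN⟩ : ∃ N : ℕ, Real.exp (3 / c) ≤ N := ⟨⌈Real.exp (3 / c)⌉₊, Nat.le_ceil _⟩
  -- summability of the tail bounds
  have hb_le : ∀ n : ℕ, b n ≤ (C * Real.exp (2 + 3 * N)) * (((n : ℝ) + 1) * Real.exp (-1) ^ n) := by
    intro n
    have hlog : (0 : ℝ) ≤ Real.log ((n : ℝ) + 2) := Real.log_nonneg (by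
      have : (0 : ℝ) ≤ (n : ℝ) := Nat.cast_nonneg n
      linarith)
    have key : 3 * (n : ℝ) ≤ 3 * N + c * n * Real.log ((n : ℝ) + 2) := by
      rcases le_or_gt (N : ℝ) (n : ℝ) with h | h
      · have h2 : Real.exp (3 / c) ≤ (n : ℝ) + 2 := le_trans hN (by linarith)
        have h3 : 3 / c ≤ Real.log ((n : ℝ) + 2) := (Real.le_log_iff_exp_le (by
          have := Real.exp_pos (3 / c); linarith)).2 h2
        have h4 : 3 ≤ c * Real.log ((n : ℝ) + 2) := by
          rw [← div_le_iff₀' hc]; exact h3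
        have hn0 : (0 : ℝ) ≤ (n : ℝ) := Nat.cast_nonneg n
        have hN0 : (0 : ℝ) ≤ (N : ℝ) := Nat.cast_nonneg N
        nlinarith
      · have hn0 : (0 : ℝ) ≤ (n : ℝ) := Nat.cast_nonneg n
        have hcl : 0 ≤ c * (n : ℝ) * Real.log ((n : ℝ) + 2) := by positivity
        linarith
    have e1 : Real.exp (2 * n + 2) * Real.exp (-(c * n * Real.log ((n : ℝ) + 2)))
        ≤ Real.exp (2 + 3 * N) * Real.exp (-1) ^ n := by
      rw [← Real.exp_nat_mul, ← Real.exp_add, ← Real.exp_add]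
      apply Real.exp_le_exp.2
      linarith
    calc b n = C * ((n : ℝ) + 1) *
          (Real.exp (2 * n + 2) * Real.exp (-(c * n * Real.log ((n : ℝ) + 2)))) := by
          simp only [hb_def, hφ_def]; ring
      _ ≤ C * ((n : ℝ) + 1) * (Real.exp (2 + 3 * N) * Real.exp (-1) ^ n) := by
          apply mul_le_mul_of_nonneg_left e1 (by positivity)
      _ = (C * Real.exp (2 + 3 * N)) * (((n : ℝ) + 1) * Real.exp (-1) ^ n) := by ring
  have hgeom : Summable (fun n : ℕ => ((n : ℝ) + 1) * Real.exp (-1) ^ n) := by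
    have hr : ‖Real.exp (-1)‖ < 1 := by
      rw [Real.norm_eq_abs, abs_of_pos (Real.exp_pos _)]
      exact Real.exp_lt_one_iff.mpr (by norm_num)
    have h1 := summable_pow_mul_geometric_of_norm_lt_one (R := ℝ) 1 hr
    have h2 := summable_geometric_of_norm_lt_one hr
    simpa [pow_one, add_mul, one_mul] using h1.add h2
  have hb_summable : Summable b :=
    Summable.of_nonneg_of_le hb_nonneg hb_le (hgeom.mul_left _)
  set S : ℝ := ∑' n, b n with hS_def
  have hS_nonneg : 0 ≤ S := tsum_nonneg hb_nonneg
  refine ⟨S + 1, by linarith, ?_⟩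
  intro Ω mΩ μ hμ Z hZm hZ0 htail k
  set H : Ω → ℝ := fun ω => φ ⌊Z ω⌋₊ with hH_def
  have hH0 : ∀ ω, 0 ≤ H ω := fun ω => by simp only [hH_def, hφ_def]; positivity
  have hfloor_m : Measurable (fun ω => ⌊Z ω⌋₊) := Nat.measurable_floor.comp hZm
  have hHm : Measurable H := Measurable.comp (measurable_from_nat (f := φ)) hfloor_m
  -- nonnegativity of the integrand
  have hf0 : ∀ ω, 0 ≤ Real.exp (Z ω) -
      ∑ ℓ ∈ Finset.range (k + 1), (Z ω) ^ ℓ / (Nat.factorial ℓ) := fun ω =>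
    sub_nonneg.2 (Real.sum_le_exp_of_nonneg (hZ0 ω) (k + 1))
  -- pointwise bound by H / (k+1)
  have hfH : ∀ ω, Real.exp (Z ω) -
      ∑ ℓ ∈ Finset.range (k + 1), (Z ω) ^ ℓ / (Nat.factorial ℓ) ≤ H ω / ((k : ℝ) + 1) := by
    intro ω
    have hx : 0 ≤ Z ω := hZ0 ω
    set n : ℕ := ⌊Z ω⌋₊ with hn_def
    have hxn : Z ω ≤ (n : ℝ) + 1 := (Nat.lt_floor_add_one (Z ω)).le
    have hn1 : (0 : ℝ) ≤ (n : ℝ) + 1 := by positivity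
    have hpf : ((n : ℝ) + 1) ^ k / (Nat.factorial k : ℝ) ≤ Real.exp ((n : ℝ) + 1) :=
      Real.pow_div_factorial_le_exp (x := (n : ℝ) + 1) hn1 k
    have hfact : (Nat.factorial (k + 1) : ℝ) = ((k : ℝ) + 1) * (Nat.factorial k : ℝ) := by
      exact_mod_cast Nat.factorial_succ k
    have hkf : (0 : ℝ) < Nat.factorial k := by exact_mod_cast Nat.factorial_pos k
    have hk1 : (0 : ℝ) < (k : ℝ) + 1 := by positivity
    calc Real.exp (Z ω) - ∑ ℓ ∈ Finset.range (k + 1), (Z ω) ^ ℓ / (Nat.factorial ℓ)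
        ≤ (Z ω) ^ (k + 1) * Real.exp (Z ω) / (Nat.factorial (k + 1)) :=
          remainder_le' (Z ω) hx k
      _ ≤ ((n : ℝ) + 1) ^ (k + 1) * Real.exp ((n : ℝ) + 1) / (Nat.factorial (k + 1)) := by
          gcongr
      _ = (((n : ℝ) + 1) * Real.exp ((n : ℝ) + 1) / ((k : ℝ) + 1)) *
            (((n : ℝ) + 1) ^ k / (Nat.factorial k : ℝ)) := by
          rw [hfact, pow_succ]
          field_simp
      _ ≤ (((n : ℝ) + 1) * Real.exp ((n : ℝ) + 1) / ((k : ℝ) + 1)) * Real.exp ((n : ℝ) + 1) := by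
          apply mul_le_mul_of_nonneg_left hpf (by positivity)
      _ = H ω / ((k : ℝ) + 1) := by
          simp only [hH_def, hφ_def, ← hn_def]
          have hee : Real.exp ((n : ℝ) + 1) * Real.exp ((n : ℝ) + 1)
              = Real.exp (2 * (n : ℝ) + 2) := by
            rw [← Real.exp_add]; congr 1; ring
          rw [← hee]; ring
  -- the partition sets
  set s : ℕ → Set Ω := fun n => (fun ω => ⌊Z ω⌋₊) ⁻¹' {n} with hs_def
  have hs_meas : ∀ n, MeasurableSet (s n) := fun n => hfloor_m (measurableSet_singleton n)
  have hμs : ∀ n : ℕ, μ (s n) ≤ ENNReal.ofReal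
      (C * Real.exp (-(c * n * Real.log ((n : ℝ) + 2)))) := by
    intro n
    have hsub : s n ⊆ {ω | (n : ℝ) ≤ Z ω} := by
      intro ω hω
      have : ⌊Z ω⌋₊ = n := hω
      have h2 : ((⌊Z ω⌋₊ : ℕ) : ℝ) ≤ Z ω := Nat.floor_le (hZ0 ω)
      rw [this] at h2
      exact h2
    refine le_trans (measure_mono hsub) ?_
    rw [ENNReal.le_ofReal_iff_toReal_le (measure_ne_top μ _) (by positivity)]
    exact htail (n : ℝ) (Nat.cast_nonneg n)
  -- lintegral bound
  have hpt : ∀ ω, ENNReal.ofReal (H ω)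
      = ∑' n : ℕ, Set.indicator (s n) (fun _ => ENNReal.ofReal (φ n)) ω := by
    intro ω
    rw [tsum_eq_single ⌊Z ω⌋₊ ?_]
    · rw [Set.indicator_of_mem (by simp [hs_def])]
    · intro m hm
      apply Set.indicator_of_notMem
      simp only [hs_def, Set.mem_preimage, Set.mem_singleton_iff]
      exact fun h => hm h.symm
  have hlin : ∫⁻ ω, ENNReal.ofReal (H ω) ∂μ ≤ ENNReal.ofReal S := by
    calc ∫⁻ ω, ENNReal.ofReal (H ω) ∂μ
        = ∫⁻ ω, ∑' n : ℕ, Set.indicator (s n) (fun _ => ENNReal.ofReal (φ n)) ω ∂μ := by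
          exact lintegral_congr hpt
      _ = ∑' n : ℕ, ∫⁻ ω, Set.indicator (s n) (fun _ => ENNReal.ofReal (φ n)) ω ∂μ :=
          lintegral_tsum fun n => (measurable_const.indicator (hs_meas n)).aemeasurable
      _ = ∑' n : ℕ, ENNReal.ofReal (φ n) * μ (s n) :=
          tsum_congr fun n => lintegral_indicator_const (hs_meas n) _
      _ ≤ ∑' n : ℕ, ENNReal.ofReal (φ n) * ENNReal.ofReal
            (C * Real.exp (-(c * n * Real.log ((n : ℝ) + 2)))) :=
          ENNReal.tsum_le_tsum fun n => mul_le_mul_right (hμs n) _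
      _ = ∑' n : ℕ, ENNReal.ofReal (b n) := by
          refine tsum_congr fun n => ?_
          rw [← ENNReal.ofReal_mul (by simp only [hφ_def]; positivity)]
      _ = ENNReal.ofReal S := (ENNReal.ofReal_tsum_of_nonneg hb_nonneg hb_summable).symm
  have hHint : Integrable H μ := by
    refine ⟨hHm.aestronglyMeasurable, ?_⟩
    rw [hasFiniteIntegral_iff_ofReal (Filter.Eventually.of_forall hH0)]
    exact lt_of_le_of_lt hlin ENNReal.ofReal_lt_top
  have hHle : ∫ ω, H ω ∂μ ≤ S := by
    rw [integral_eq_lintegral_of_nonneg_ae (Filter.Eventually.of_forall hH0)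
      hHm.aestronglyMeasurable]
    have h := ENNReal.toReal_mono ENNReal.ofReal_ne_top hlin
    rwa [ENNReal.toReal_ofReal hS_nonneg] at h
  have hk1 : (0 : ℝ) < (k : ℝ) + 1 := by positivity
  have hint2 : Integrable (fun ω => H ω / ((k : ℝ) + 1)) μ := hHint.div_const _
  have h1 : ∫ ω, (Real.exp (Z ω) -
      ∑ ℓ ∈ Finset.range (k + 1), (Z ω) ^ ℓ / (Nat.factorial ℓ)) ∂μ
      ≤ ∫ ω, H ω / ((k : ℝ) + 1) ∂μ :=
    integral_mono_of_nonneg (Filter.Eventually.of_forall hf0) hint2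
      (Filter.Eventually.of_forall hfH)
  have h2 : ∫ ω, H ω / ((k : ℝ) + 1) ∂μ = (∫ ω, H ω ∂μ) / ((k : ℝ) + 1) :=
    integral_div _ _
  rw [abs_of_nonneg (integral_nonneg hf0)]
  calc ∫ ω, (Real.exp (Z ω) -
        ∑ ℓ ∈ Finset.range (k + 1), (Z ω) ^ ℓ / (Nat.factorial ℓ)) ∂μ
      ≤ (∫ ω, H ω ∂μ) / ((k : ℝ) + 1) := h2 ▸ h1
    _ ≤ S / ((k : ℝ) + 1) := by gcongr
    _ ≤ (S + 1) / ((k : ℝ) + 1) := by gcongr; linarith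
end

section
/- Let (Z_T) and (E_N) be families of nonnegative random variables such that (i) for every integer ℓ ≥ 0, lim_{T→∞} E[Z_T^ℓ] = lim_{N→∞} E[E_N^ℓ], both limits existing, and (ii) P(Z_T ≥ r) ≤ C e^{−c r log(r+2)} and P(E_N ≥ r) ≤ C e^{−c r log(r+2)} uniformly in T, N. Then lim_{T→∞} E[e^{Z_T}] = lim_{N→∞} E[e^{E_N}], with both limits existing. -/
open MeasureTheory Filter

namespace MMAux

set_option linter.unusedSectionVars false
set_option linter.unusedVariables false

/-- remainder of the exponential series -/
noncomputable def R (K : ℕ) (x : ℝ) : ℝ :=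
  Real.exp x - ∑ ℓ ∈ Finset.range K, x ^ ℓ / ℓ.factorial

lemma exp_tsum (x : ℝ) : Real.exp x = ∑' n : ℕ, x ^ n / n.factorial := by
  rw [Real.exp_eq_exp_ℝ, NormedSpace.exp_eq_tsum_div]

lemma summable_shift (x : ℝ) (K : ℕ) :
    Summable (fun n : ℕ => x ^ (n + K) / (n + K).factorial) :=
  (summable_nat_add_iff K).2 (Real.summable_pow_div_factorial x)

lemma R_eq_tsum (K : ℕ) (x : ℝ) :
    R K x = ∑' n : ℕ, x ^ (n + K) / (n + K).factorial := by
  have h := Summable.sum_add_tsum_nat_add (f := fun n : ℕ => x ^ n / n.factorial) K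
      (Real.summable_pow_div_factorial x)
  rw [R, exp_tsum]
  linarith

lemma R_nonneg (K : ℕ) {x : ℝ} (hx : 0 ≤ x) : 0 ≤ R K x :=
  sub_nonneg.2 (Real.sum_le_exp_of_nonneg hx K)

lemma R_mono (K : ℕ) {x y : ℝ} (hx : 0 ≤ x) (hxy : x ≤ y) : R K x ≤ R K y := by
  rw [R_eq_tsum, R_eq_tsum]
  refine Summable.tsum_le_tsum (fun n => ?_) (summable_shift x K) (summable_shift y K)
  gcongr

lemma R_le_exp (K : ℕ) {x : ℝ} (hx : 0 ≤ x) : R K x ≤ Real.exp x := by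
  have : (0:ℝ) ≤ ∑ ℓ ∈ Finset.range K, x ^ ℓ / ℓ.factorial :=
    Finset.sum_nonneg fun ℓ _ => by positivity
  rw [R]; linarith

lemma R_tendsto (x : ℝ) : Tendsto (fun K => R K x) atTop (nhds 0) := by
  have h : Tendsto (fun K => ∑ ℓ ∈ Finset.range K, x ^ ℓ / ℓ.factorial) atTop
      (nhds (Real.exp x)) := by
    rw [exp_tsum]
    exact (Real.summable_pow_div_factorial x).hasSum.tendsto_sum_nat
  have := (tendsto_const_nhds (x := Real.exp x) (f := atTop)).sub h
  simpa [R] using this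

/-- dominating tail series -/
noncomputable def hseq (c C : ℝ) (n : ℕ) : ℝ :=
  Real.exp (n + 1) * (C * Real.exp (-(c * n * Real.log (n + 2))))

lemma hseq_nonneg (c C : ℝ) (hC : 0 < C) (n : ℕ) : 0 ≤ hseq c C n := by
  unfold hseq; positivity

lemma hseq_summable {c C : ℝ} (hc : 0 < c) (hC : 0 < C) : Summable (hseq c C) := by
  set N₀ : ℕ := ⌈Real.exp (2 / c)⌉₊ with hN₀
  have hg : Summable (fun n : ℕ => (C * Real.exp 1) * Real.exp (-1) ^ n) :=
    (summable_geometric_of_lt_one (Real.exp_pos _).le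
      (Real.exp_lt_one_iff.2 (by norm_num))).mul_left _
  refine (summable_nat_add_iff N₀).1 ?_
  refine Summable.of_nonneg_of_le (fun n => hseq_nonneg c C hC _)
    (fun n => ?_) ((summable_nat_add_iff N₀).2 hg)
  set m : ℕ := n + N₀ with hm
  have hm0 : (0:ℝ) ≤ (m:ℝ) := Nat.cast_nonneg m
  have hexp : Real.exp (2 / c) ≤ (m:ℝ) + 2 := by
    have h1 : Real.exp (2 / c) ≤ (N₀:ℝ) := Nat.le_ceil _
    have h2 : (N₀:ℝ) ≤ (m:ℝ) := by exact_mod_cast Nat.le_add_left N₀ n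
    linarith
  have hlog : 2 / c ≤ Real.log ((m:ℝ) + 2) :=
    (Real.le_log_iff_exp_le (by positivity)).2 hexp
  have hkey : 2 * (m:ℝ) ≤ c * m * Real.log ((m:ℝ) + 2) := by
    have := mul_le_mul_of_nonneg_left hlog (by positivity : (0:ℝ) ≤ c * m)
    calc 2 * (m:ℝ) = c * m * (2 / c) := by field_simp
      _ ≤ c * m * Real.log ((m:ℝ) + 2) := this
  have : hseq c C m ≤ C * Real.exp 1 * Real.exp (-1) ^ m := by
    have hpow : Real.exp (-1) ^ m = Real.exp (-(m:ℝ)) := by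
      rw [← Real.exp_nat_mul]; ring_nf
    rw [hseq, hpow]
    have : Real.exp ((m:ℝ) + 1) * Real.exp (-(c * m * Real.log ((m:ℝ) + 2)))
        ≤ Real.exp ((m:ℝ) + 1) * Real.exp (-(2 * m)) := by
      exact mul_le_mul_of_nonneg_left (Real.exp_le_exp.2 (by linarith))
        (Real.exp_pos _).le
    calc Real.exp ((m:ℝ) + 1) * (C * Real.exp (-(c * ↑m * Real.log (↑m + 2))))
        = C * (Real.exp ((m:ℝ) + 1) * Real.exp (-(c * m * Real.log ((m:ℝ) + 2)))) := by ring
      _ ≤ C * (Real.exp ((m:ℝ) + 1) * Real.exp (-(2 * m))) := by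
          exact mul_le_mul_of_nonneg_left this hC.le
      _ = C * Real.exp 1 * Real.exp (-(m:ℝ)) := by
          rw [← Real.exp_add, show (m:ℝ) + 1 + -(2 * m) = 1 + -(m:ℝ) by ring,
            Real.exp_add]; ring
  exact this

lemma S_tendsto {c C : ℝ} (hc : 0 < c) (hC : 0 < C) :
    Tendsto (fun A : ℕ => ∑' n : ℕ, hseq c C (n + A)) atTop (nhds 0) :=
  tendsto_sum_nat_add (hseq c C)

section Measure

variable {Ω : Type*} [MeasurableSpace Ω] (μ : Measure Ω) [IsProbabilityMeasure μ]
  (X : Ω → ℝ) (hX : Measurable X) (hpos : ∀ ω, 0 ≤ X ω) {c C : ℝ} (hc : 0 < c) (hC : 0 < C)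
  (htail : ∀ r : ℝ, 0 ≤ r →
    (μ {ω | r ≤ X ω}).toReal ≤ C * Real.exp (-(c * r * Real.log (r + 2))))

include hX hpos hc hC htail in
lemma key_lintegral (A : ℕ) (hsum : Summable (hseq c C)) :
    ∫⁻ ω, ENNReal.ofReal ({ω | (A:ℝ) ≤ X ω}.indicator (fun ω => Real.exp (X ω)) ω) ∂μ
      ≤ ENNReal.ofReal (∑' n : ℕ, hseq c C (n + A)) := by
  set s : ℕ → Set Ω := fun n => {ω | (n:ℝ) + A ≤ X ω ∧ X ω < (n:ℝ) + A + 1} with hs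
  have hmeas_s : ∀ n, MeasurableSet (s n) := by
    intro n
    exact (hX measurableSet_Ici).inter (hX measurableSet_Iio)
  have hpt : ∀ ω, ENNReal.ofReal ({ω | (A:ℝ) ≤ X ω}.indicator (fun ω => Real.exp (X ω)) ω)
      ≤ ∑' n : ℕ, (s n).indicator (fun _ => ENNReal.ofReal (Real.exp ((n:ℝ) + A + 1))) ω := by
    intro ω
    by_cases hω : (A:ℝ) ≤ X ω
    · rw [Set.indicator_of_mem (show ω ∈ {ω | (A:ℝ) ≤ X ω} from hω)]
      have hmA : A ≤ ⌊X ω⌋₊ := Nat.le_floor hω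
      obtain ⟨n, hn⟩ : ∃ n, ⌊X ω⌋₊ = n + A := ⟨⌊X ω⌋₊ - A, (Nat.sub_add_cancel hmA).symm⟩
      have h1 : (n:ℝ) + A ≤ X ω := by
        have := Nat.floor_le (hpos ω)
        rw [hn] at this; push_cast at this; linarith
      have h2 : X ω < (n:ℝ) + A + 1 := by
        have := Nat.lt_floor_add_one (X ω)
        rw [hn] at this; push_cast at this; linarith
      calc ENNReal.ofReal (Real.exp (X ω))
          ≤ (s n).indicator (fun _ => ENNReal.ofReal (Real.exp ((n:ℝ) + A + 1))) ω := by
            rw [Set.indicator_of_mem (show ω ∈ s n from ⟨h1, h2⟩)]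
            exact ENNReal.ofReal_le_ofReal (Real.exp_le_exp.2 h2.le)
        _ ≤ _ := ENNReal.le_tsum n
    · rw [Set.indicator_of_notMem (show ω ∉ {ω | (A:ℝ) ≤ X ω} from hω)]
      simp
  calc ∫⁻ ω, ENNReal.ofReal ({ω | (A:ℝ) ≤ X ω}.indicator (fun ω => Real.exp (X ω)) ω) ∂μ
      ≤ ∫⁻ ω, ∑' n : ℕ, (s n).indicator (fun _ => ENNReal.ofReal (Real.exp ((n:ℝ) + A + 1))) ω ∂μ :=
        lintegral_mono hpt
    _ = ∑' n : ℕ, ∫⁻ ω, (s n).indicator (fun _ => ENNReal.ofReal (Real.exp ((n:ℝ) + A + 1))) ω ∂μ :=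
        lintegral_tsum (fun n => (measurable_const.indicator (hmeas_s n)).aemeasurable)
    _ = ∑' n : ℕ, ENNReal.ofReal (Real.exp ((n:ℝ) + A + 1)) * μ (s n) :=
        tsum_congr fun n => lintegral_indicator_const (hmeas_s n) _
    _ ≤ ∑' n : ℕ, ENNReal.ofReal (hseq c C (n + A)) := by
        refine ENNReal.tsum_le_tsum fun n => ?_
        have hsub : μ (s n) ≤ μ {ω | (n:ℝ) + A ≤ X ω} :=
          measure_mono fun ω hω => hω.1
        have htb : μ {ω | (n:ℝ) + A ≤ X ω}
            ≤ ENNReal.ofReal (C * Real.exp (-(c * ((n:ℝ) + A) * Real.log (((n:ℝ) + A) + 2)))) := by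
          refine (ENNReal.le_ofReal_iff_toReal_le (measure_ne_top μ _) (by positivity)).2 ?_
          exact htail _ (by positivity)
        calc ENNReal.ofReal (Real.exp ((n:ℝ) + A + 1)) * μ (s n)
            ≤ ENNReal.ofReal (Real.exp ((n:ℝ) + A + 1)) *
              ENNReal.ofReal (C * Real.exp (-(c * ((n:ℝ) + A) * Real.log (((n:ℝ) + A) + 2)))) :=
              mul_le_mul_right (hsub.trans htb) _
          _ = ENNReal.ofReal (hseq c C (n + A)) := by
              rw [← ENNReal.ofReal_mul (Real.exp_pos _).le]
              congr 1
              unfold hseq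
              push_cast
              ring_nf
    _ = ENNReal.ofReal (∑' n : ℕ, hseq c C (n + A)) := by
        rw [ENNReal.ofReal_tsum_of_nonneg (fun n => by unfold hseq; positivity)
          ((summable_nat_add_iff A).2 hsum)]

include hX hpos hc hC htail in
lemma tail_integral_le (A : ℕ) (hsum : Summable (hseq c C)) :
    ∫ ω, {ω | (A:ℝ) ≤ X ω}.indicator (fun ω => Real.exp (X ω)) ω ∂μ
      ≤ ∑' n : ℕ, hseq c C (n + A) := by
  have hnn : 0 ≤ᵐ[μ] fun ω => {ω | (A:ℝ) ≤ X ω}.indicator (fun ω => Real.exp (X ω)) ω :=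
    Filter.Eventually.of_forall fun ω =>
      Set.indicator_nonneg (fun _ _ => (Real.exp_pos _).le) ω
  have hmeas : AEStronglyMeasurable
      (fun ω => {ω | (A:ℝ) ≤ X ω}.indicator (fun ω => Real.exp (X ω)) ω) μ :=
    ((Real.measurable_exp.comp hX).indicator (hX measurableSet_Ici)).aestronglyMeasurable
  rw [integral_eq_lintegral_of_nonneg_ae hnn hmeas]
  exact ENNReal.toReal_le_of_le_ofReal
    (tsum_nonneg fun n => hseq_nonneg c C hC _)
    (key_lintegral μ X hX hpos hc hC htail A hsum)

include hX hpos hc hC htail in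
lemma integrable_exp (hsum : Summable (hseq c C)) :
    Integrable (fun ω => Real.exp (X ω)) μ := by
  refine ⟨(Real.measurable_exp.comp hX).aestronglyMeasurable, ?_⟩
  rw [hasFiniteIntegral_iff_ofReal (Filter.Eventually.of_forall fun ω => (Real.exp_pos _).le)]
  have heq : ∀ ω, ENNReal.ofReal (Real.exp (X ω))
      = ENNReal.ofReal ({ω | ((0:ℕ):ℝ) ≤ X ω}.indicator (fun ω => Real.exp (X ω)) ω) := by
    intro ω
    rw [Set.indicator_of_mem (show ω ∈ {ω | ((0:ℕ):ℝ) ≤ X ω} by simpa using hpos ω)]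
  calc ∫⁻ ω, ENNReal.ofReal (Real.exp (X ω)) ∂μ
      = ∫⁻ ω, ENNReal.ofReal ({ω | ((0:ℕ):ℝ) ≤ X ω}.indicator
          (fun ω => Real.exp (X ω)) ω) ∂μ := lintegral_congr heq
    _ ≤ ENNReal.ofReal (∑' n : ℕ, hseq c C (n + 0)) :=
        key_lintegral μ X hX hpos hc hC htail 0 hsum
    _ < ⊤ := ENNReal.ofReal_lt_top

include hX hpos hc hC htail in
lemma integrable_pow (hsum : Summable (hseq c C)) (ℓ : ℕ) :
    Integrable (fun ω => X ω ^ ℓ) μ := by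
  have hx : ∀ ω, ‖X ω ^ ℓ‖ ≤ (ℓ.factorial : ℝ) * Real.exp (X ω) := by
    intro ω
    rw [Real.norm_eq_abs, abs_of_nonneg (pow_nonneg (hpos ω) ℓ)]
    have h1 : X ω ^ ℓ / ℓ.factorial ≤ Real.exp (X ω) :=
      calc X ω ^ ℓ / ℓ.factorial
          ≤ ∑ i ∈ Finset.range (ℓ+1), X ω ^ i / i.factorial :=
            Finset.single_le_sum (f := fun i => X ω ^ i / (i.factorial : ℝ))
              (fun i _ => by have := hpos ω; positivity) (Finset.self_mem_range_succ ℓ)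
        _ ≤ Real.exp (X ω) := Real.sum_le_exp_of_nonneg (hpos ω) _
    have hfac : (0:ℝ) < ℓ.factorial := by positivity
    calc X ω ^ ℓ = (ℓ.factorial : ℝ) * (X ω ^ ℓ / ℓ.factorial) := by field_simp
      _ ≤ (ℓ.factorial : ℝ) * Real.exp (X ω) :=
          mul_le_mul_of_nonneg_left h1 hfac.le
  exact ((integrable_exp μ X hX hpos hc hC htail hsum).const_mul _).mono'
    ((hX.pow_const ℓ).aestronglyMeasurable) (Filter.Eventually.of_forall hx)

include hX hpos hc hC htail in
lemma approx (hsum : Summable (hseq c C)) (K A : ℕ) :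
    0 ≤ (∫ ω, Real.exp (X ω) ∂μ)
        - ∑ ℓ ∈ Finset.range K, (∫ ω, X ω ^ ℓ ∂μ) / ℓ.factorial ∧
    (∫ ω, Real.exp (X ω) ∂μ)
        - ∑ ℓ ∈ Finset.range K, (∫ ω, X ω ^ ℓ ∂μ) / ℓ.factorial
      ≤ R K A + ∑' n : ℕ, hseq c C (n + A) := by
  have hie := integrable_exp μ X hX hpos hc hC htail hsum
  have hip := integrable_pow μ X hX hpos hc hC htail hsum
  have hsum_int : Integrable (fun ω => ∑ ℓ ∈ Finset.range K, X ω ^ ℓ / ℓ.factorial) μ :=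
    integrable_finset_sum _ (fun ℓ _ => (hip ℓ).div_const _)
  have hRint : Integrable (fun ω => R K (X ω)) μ := hie.sub hsum_int
  have hid : (∫ ω, Real.exp (X ω) ∂μ)
      - ∑ ℓ ∈ Finset.range K, (∫ ω, X ω ^ ℓ ∂μ) / ℓ.factorial
      = ∫ ω, R K (X ω) ∂μ := by
    unfold R
    rw [integral_sub hie hsum_int,
      integral_finset_sum _ (fun ℓ _ => (hip ℓ).div_const _)]
    congr 1
    exact Finset.sum_congr rfl fun ℓ _ => (integral_div _ _).symm
  constructor
  · rw [hid]; exact integral_nonneg fun ω => R_nonneg K (hpos ω)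
  · rw [hid]
    have hind_int : Integrable
        (fun ω => {ω | (A:ℝ) ≤ X ω}.indicator (fun ω => Real.exp (X ω)) ω) μ :=
      hie.indicator (hX measurableSet_Ici)
    have hptw : ∀ ω, R K (X ω)
        ≤ R K A + {ω | (A:ℝ) ≤ X ω}.indicator (fun ω => Real.exp (X ω)) ω := by
      intro ω
      by_cases hω : (A:ℝ) ≤ X ω
      · rw [Set.indicator_of_mem (show ω ∈ {ω | (A:ℝ) ≤ X ω} from hω)]
        have h1 := R_le_exp K (hpos ω)
        have h2 := R_nonneg K (show (0:ℝ) ≤ (A:ℝ) by positivity)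
        linarith
      · rw [Set.indicator_of_notMem (show ω ∉ {ω | (A:ℝ) ≤ X ω} from hω)]
        have := R_mono K (hpos ω) (le_of_lt (lt_of_not_ge hω))
        linarith
    calc ∫ ω, R K (X ω) ∂μ
        ≤ ∫ ω, (R K A + {ω | (A:ℝ) ≤ X ω}.indicator (fun ω => Real.exp (X ω)) ω) ∂μ :=
          integral_mono hRint ((integrable_const _).add hind_int) hptw
      _ = R K A + ∫ ω, {ω | (A:ℝ) ≤ X ω}.indicator (fun ω => Real.exp (X ω)) ω ∂μ := by
          rw [integral_add (integrable_const _) hind_int, integral_const]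
          simp
      _ ≤ R K A + ∑' n : ℕ, hseq c C (n + A) := by
          linarith [tail_integral_le μ X hX hpos hc hC htail A hsum]

end Measure

lemma uniform {Ω : Type*} [MeasurableSpace Ω] (μ : Measure Ω) [IsProbabilityMeasure μ]
    (X : ℕ → Ω → ℝ) (hmeas : ∀ T, Measurable (X T)) (hpos : ∀ T ω, 0 ≤ X T ω)
    {c C : ℝ} (hc : 0 < c) (hC : 0 < C)
    (htail : ∀ (T : ℕ) (r : ℝ), 0 ≤ r →
      (μ {ω | r ≤ X T ω}).toReal ≤ C * Real.exp (-(c * r * Real.log (r + 2)))) :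
    ∀ ε > 0, ∃ K₀ : ℕ, ∀ K ≥ K₀, ∀ T,
      |(∫ ω, Real.exp (X T ω) ∂μ)
        - ∑ ℓ ∈ Finset.range K, (∫ ω, X T ω ^ ℓ ∂μ) / ℓ.factorial| ≤ ε := by
  intro ε hε
  have hsum := hseq_summable hc hC
  obtain ⟨A, hA⟩ : ∃ A : ℕ, ∑' n : ℕ, hseq c C (n + A) ≤ ε / 2 :=
    ((S_tendsto hc hC).eventually (eventually_le_nhds (by linarith : (0:ℝ) < ε / 2))).exists
  obtain ⟨K₀, hK₀⟩ : ∃ K₀ : ℕ, ∀ K ≥ K₀, R K (A:ℝ) ≤ ε / 2 :=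
    eventually_atTop.1 ((R_tendsto (A:ℝ)).eventually
      (eventually_le_nhds (by linarith : (0:ℝ) < ε / 2)))
  refine ⟨K₀, fun K hK T => ?_⟩
  obtain ⟨h1, h2⟩ := approx μ (X T) (hmeas T) (hpos T) hc hC (htail T) hsum K A
  rw [abs_of_nonneg h1]
  have := hK₀ K hK
  linarith

lemma limit_of_uniform (F : ℕ → ℝ) (P : ℕ → ℕ → ℝ) (SK : ℕ → ℝ) (Linf : ℝ)
    (hU : ∀ ε > 0, ∃ K₀ : ℕ, ∀ K ≥ K₀, ∀ T, |F T - P K T| ≤ ε)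
    (hP : ∀ K, Tendsto (P K) atTop (nhds (SK K)))
    (hS : Tendsto SK atTop (nhds Linf)) :
    Tendsto F atTop (nhds Linf) := by
  rw [Metric.tendsto_atTop]
  intro ε hε
  obtain ⟨K₀, hK₀⟩ := hU (ε / 4) (by linarith)
  obtain ⟨K₁, hK₁⟩ := Metric.tendsto_atTop.1 hS (ε / 4) (by linarith)
  set K := max K₀ K₁ with hKdef
  have hKge : K ≥ K₀ := le_max_left _ _
  have hKS : |SK K - Linf| < ε / 4 := by
    have := hK₁ K (le_max_right _ _)
    rwa [Real.dist_eq] at this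
  obtain ⟨T₀, hT₀'⟩ := Metric.tendsto_atTop.1 (hP K) (ε / 4) (by linarith)
  have hT₀ : ∀ T ≥ T₀, |P K T - SK K| < ε / 4 := fun T hT => by
    have := hT₀' T hT
    rwa [Real.dist_eq] at this
  refine ⟨T₀, fun T hT => ?_⟩
  rw [Real.dist_eq]
  have h1 := hK₀ K hKge T
  have h2 := hT₀ T hT
  calc |F T - Linf|
      ≤ |F T - P K T| + |P K T - SK K| + |SK K - Linf| := by
        have := abs_sub_abs_le_abs_sub (F T) Linf
        calc |F T - Linf| = |(F T - P K T) + (P K T - SK K) + (SK K - Linf)| := by ring_nf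
          _ ≤ _ := by
            refine (abs_add_le _ _).trans ?_
            gcongr
            exact abs_add_le _ _
    _ < ε := by linarith

end MMAux

open MMAux in
theorem matching_moments_and_tails_imply_matching_exp_moments
    {Ω Ω' : Type*} [MeasurableSpace Ω] [MeasurableSpace Ω']
    (μ : Measure Ω) (ν : Measure Ω') [IsProbabilityMeasure μ] [IsProbabilityMeasure ν]
    (Z : ℕ → Ω → ℝ) (E : ℕ → Ω' → ℝ)
    (hZmeas : ∀ T, Measurable (Z T)) (hEmeas : ∀ N, Measurable (E N))
    (hZpos : ∀ T ω, 0 ≤ Z T ω) (hEpos : ∀ N ω, 0 ≤ E N ω)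
    (c C : ℝ) (hc : 0 < c) (hC : 0 < C)
    (hZtail : ∀ (T : ℕ) (r : ℝ), 0 ≤ r →
      (μ {ω | r ≤ Z T ω}).toReal ≤ C * Real.exp (-(c * r * Real.log (r + 2))))
    (hEtail : ∀ (N : ℕ) (r : ℝ), 0 ≤ r →
      (ν {ω | r ≤ E N ω}).toReal ≤ C * Real.exp (-(c * r * Real.log (r + 2))))
    (hmom : ∀ ℓ : ℕ, ∃ L : ℝ,
      Tendsto (fun T => ∫ ω, (Z T ω) ^ ℓ ∂μ) atTop (nhds L) ∧
      Tendsto (fun N => ∫ ω, (E N ω) ^ ℓ ∂ν) atTop (nhds L)) :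
    ∃ L : ℝ,
      Tendsto (fun T => ∫ ω, Real.exp (Z T ω) ∂μ) atTop (nhds L) ∧
      Tendsto (fun N => ∫ ω, Real.exp (E N ω) ∂ν) atTop (nhds L) := by
  classical
  choose L hLZ hLE using hmom
  have hsZ := uniform μ Z hZmeas hZpos hc hC hZtail
  have hsE := uniform ν E hEmeas hEpos hc hC hEtail
  set P : ℕ → ℕ → ℝ :=
    fun K T => ∑ ℓ ∈ Finset.range K, (∫ ω, (Z T ω) ^ ℓ ∂μ) / ℓ.factorial with hP
  set Q : ℕ → ℕ → ℝ :=
    fun K N => ∑ ℓ ∈ Finset.range K, (∫ ω, (E N ω) ^ ℓ ∂ν) / ℓ.factorial with hQ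
  set SK : ℕ → ℝ := fun K => ∑ ℓ ∈ Finset.range K, L ℓ / ℓ.factorial with hSK
  have hPK : ∀ K, Tendsto (P K) atTop (nhds (SK K)) := fun K =>
    tendsto_finset_sum _ fun ℓ _ => (hLZ ℓ).div_const _
  have hQK : ∀ K, Tendsto (Q K) atTop (nhds (SK K)) := fun K =>
    tendsto_finset_sum _ fun ℓ _ => (hLE ℓ).div_const _
  have hcauchy : CauchySeq SK := by
    rw [Metric.cauchySeq_iff]
    intro ε hε
    obtain ⟨K₀, hK₀⟩ := hsZ (ε / 4) (by linarith)
    refine ⟨K₀, fun K hK K' hK' => ?_⟩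
    have hbd : ∀ T, |P K T - P K' T| ≤ ε / 2 := by
      intro T
      have h1 := hK₀ K hK T
      have h2 := hK₀ K' hK' T
      set F := ∫ ω, Real.exp (Z T ω) ∂μ with hF
      calc |P K T - P K' T| = |(F - P K' T) - (F - P K T)| := by ring_nf
        _ ≤ |F - P K' T| + |F - P K T| := abs_sub _ _
        _ ≤ ε / 4 + ε / 4 := add_le_add h2 h1
        _ = ε / 2 := by ring
    have hlim : Tendsto (fun T => |P K T - P K' T|) atTop (nhds |SK K - SK K'|) :=
      ((hPK K).sub (hPK K')).abs
    have := le_of_tendsto hlim (Filter.Eventually.of_forall hbd)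
    rw [Real.dist_eq]
    linarith
  obtain ⟨Linf, hLinf⟩ := cauchySeq_tendsto_of_complete hcauchy
  refine ⟨Linf, ?_, ?_⟩
  · exact limit_of_uniform _ P SK Linf
      (fun ε hε => by
        obtain ⟨K₀, h⟩ := hsZ ε hε
        exact ⟨K₀, fun K hK T => h K hK T⟩) hPK hLinf
  · exact limit_of_uniform _ Q SK Linf
      (fun ε hε => by
        obtain ⟨K₀, h⟩ := hsE ε hε
        exact ⟨K₀, fun K hK N => h K hK N⟩) hQK hLinf
end
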